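/- Gödel's First Incompleteness Theorem for nr-Smullyan models (Smullyan's Theorem G): Let M be an nr-Smullyan model. For any M-predicate H satisfying Φ(H) ⊆ True_M, there exists an M-sentence S such that S ∉ Φ(H) and nS ∉ Φ(H). -/

import Mathlib

/-- A Smullyan model over a set of symbols `α`: a set `pred` of predicates
(finite strings over `α`) satisfying the prefix-freeness requirement (†), together
with a naming function `phi` assigning a set of strings to each string
(only its values on `pred` are relevant). -/
structure SmullyanModel (α : Type) where
  pred : Set (List α)
  prefixFree : ∀ H ∈ pred, ∀ X : List α, X ≠ [] → H ++ X ∉ pred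
  phi : List α → Set (List α)

namespace SmullyanModel

variable {α : Type} (M : SmullyanModel α)

/-- The set of `M`-sentences: strings of the form `H ++ X` with `H` a predicate. -/
def sent : Set (List α) := {S | ∃ H ∈ M.pred, ∃ X : List α, S = H ++ X}

/-- `Sent_M^+ = Sent_M \ Pred_M`. -/
def sentPlus : Set (List α) := M.sent \ M.pred

/-- `True_M`: the set of true `M`-sentences. -/
def trueSet : Set (List α) := {S | ∃ H ∈ M.pred, ∃ X ∈ M.phi H, S = H ++ X}

/-- `True_M^+ = True_M \ Pred_M`. -/
def truePlus : Set (List α) := M.trueSet \ M.pred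

/-- `False_M = Sent_M \ True_M`. -/
def falseSet : Set (List α) := M.sent \ M.trueSet

/-- `False_M^+ = Sent_M^+ \ True_M^+`. -/
def falsePlus : Set (List α) := M.sentPlus \ M.truePlus

/-- `M ⊨ S`. -/
def Sat (S : List α) : Prop := S ∈ M.trueSet

/-- `S ∈ Sent_M^+` is an `M`-fixed point of `H` if `M ⊨ S ↔ M ⊨ HS`. -/
def IsFixedPoint (H S : List α) : Prop :=
  S ∈ M.sentPlus ∧ (M.Sat S ↔ M.Sat (H ++ S))

/-- `M` is an `n`-Smullyan model (with negation symbol `n : α`):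
for every predicate `H`, `nH` is a predicate and `Φ(nH) = Σ* \ Φ(H)`. -/
def IsNModel (n : α) : Prop :=
  ∀ H ∈ M.pred, (n :: H) ∈ M.pred ∧ M.phi (n :: H) = {X : List α | X ∉ M.phi H}

/-- `M` is an `r`-Smullyan model (with repeat symbol `r : α`):
for every predicate `H`, `rH` is a predicate and `Φ(rH) = {K ∈ Pred : KK ∈ Φ(H)}`. -/
def IsRModel (r : α) : Prop :=
  ∀ H ∈ M.pred, (r :: H) ∈ M.pred ∧
    M.phi (r :: H) = {K : List α | K ∈ M.pred ∧ K ++ K ∈ M.phi H}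

/-- FPT: every `M`-predicate has an `M`-fixed point. -/
def FPT : Prop := ∀ H ∈ M.pred, ∃ S : List α, M.IsFixedPoint H S

/-- T-Tarski: no `M`-predicate names `True_M`. -/
def TTarski : Prop := ¬ ∃ H ∈ M.pred, M.phi H = M.trueSet

/-- F-Tarski: no `M`-predicate names `False_M`. -/
def FTarski : Prop := ¬ ∃ H ∈ M.pred, M.phi H = M.falseSet

/-- T-Tarski⁺: there is no `M`-predicate `H` with `True_M⁺ = Φ(H) ∩ Sent_M⁺`. -/
def TTarskiPlus : Prop := ¬ ∃ H ∈ M.pred, M.truePlus = M.phi H ∩ M.sentPlus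

/-- F-Tarski⁺: there is no `M`-predicate `H` with `False_M⁺ = Φ(H) ∩ Sent_M⁺`. -/
def FTarskiPlus : Prop := ¬ ∃ H ∈ M.pred, M.falsePlus = M.phi H ∩ M.sentPlus

/-- mG1. -/
def MG1 : Prop :=
  ∀ H ∈ M.pred, M.phi H ⊆ M.trueSet →
    ∃ S ∈ M.sent, M.Sat S ∧ S ∉ M.phi H

/-- mG1⁺. -/
def MG1Plus : Prop :=
  ∀ H ∈ M.pred, M.phi H ∩ M.sentPlus ⊆ M.truePlus →
    ∃ S ∈ M.sentPlus, M.Sat S ∧ S ∉ M.phi H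

/-- G1 (for `n`-Smullyan models). -/
def G1 (n : α) : Prop :=
  ∀ H ∈ M.pred, M.phi H ⊆ M.trueSet →
    ∃ S ∈ M.sent, S ∉ M.phi H ∧ (n :: S) ∉ M.phi H

/-- G1⁺ (for `n`-Smullyan models). -/
def G1Plus (n : α) : Prop :=
  ∀ H ∈ M.pred, M.phi H ∩ M.sentPlus ⊆ M.truePlus →
    ∃ S ∈ M.sentPlus, S ∉ M.phi H ∧ (n :: S) ∉ M.phi H

/-- The predicate set of a simple model: strings `X♯` where `X` contains no `♯`. -/
def simplePred (sharp : α) : Set (List α) :=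
  {L | ∃ X : List α, sharp ∉ X ∧ L = X ++ [sharp]}

end SmullyanModel

namespace SmullyanModel

variable {α : Type} {M : SmullyanModel α}

theorem eq_of_append_eq_append {H₁ H₂ X₁ X₂ : List α} (h₁ : H₁ ∈ M.pred) (h₂ : H₂ ∈ M.pred)
    (he : H₁ ++ X₁ = H₂ ++ X₂) : H₁ = H₂ ∧ X₁ = X₂ := by
  suffices hH : H₁ = H₂ from ⟨hH, List.append_cancel_left (hH ▸ he)⟩
  have not_proper_prefix : ∀ {K L : List α}, K ∈ M.pred → L ∈ M.pred → K <+: L → K = L := by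
    rintro K _ hK hL ⟨Y, rfl⟩
    by_contra hne
    exact M.prefixFree K hK Y (by rintro rfl; simp at hne) hL
  rcases le_total H₁.length H₂.length with hl | hl
  · exact not_proper_prefix h₁ h₂ (List.prefix_of_prefix_length_le ⟨X₁, he⟩ ⟨X₂, rfl⟩ hl)
  · exact (not_proper_prefix h₂ h₁ (List.prefix_of_prefix_length_le ⟨X₂, rfl⟩ ⟨X₁, he⟩ hl)).symm

theorem sat_append_iff {H X : List α} (hH : H ∈ M.pred) : M.Sat (H ++ X) ↔ X ∈ M.phi H := by
  constructor
  · rintro ⟨K, hK, Y, hY, he⟩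
    obtain ⟨rfl, rfl⟩ := eq_of_append_eq_append hK hH he.symm
    exact hY
  · exact fun hX => ⟨H, hH, X, hX, rfl⟩

theorem IsNModel.sat_cons_iff {n : α} (hn : M.IsNModel n) {S : List α} (hS : S ∈ M.sent) :
    M.Sat (n :: S) ↔ ¬ M.Sat S := by
  obtain ⟨H, hH, X, rfl⟩ := hS
  obtain ⟨hnH, hphi⟩ := hn H hH
  rw [← List.cons_append, sat_append_iff hnH, sat_append_iff hH, hphi, Set.mem_ofPred_eq]

theorem IsRModel.sat_cons_append_self_iff {r : α} (hr : M.IsRModel r) {H K : List α}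
    (hH : H ∈ M.pred) (hK : K ∈ M.pred) : M.Sat ((r :: H) ++ K) ↔ K ++ K ∈ M.phi H := by
  rw [sat_append_iff (hr H hH).1, (hr H hH).2, Set.mem_ofPred_eq, and_iff_right hK]

/-- Smullyan's sentence `rnH rnH`, which asserts that it is not named by `H`. -/
def godelSentence (n r : α) (H : List α) : List α := (r :: n :: H) ++ (r :: n :: H)

variable {n r : α} {H : List α}

theorem godelSentence_mem_sent (hn : M.IsNModel n) (hr : M.IsRModel r) (hH : H ∈ M.pred) :
    godelSentence n r H ∈ M.sent :=
  ⟨_, (hr _ (hn H hH).1).1, _, rfl⟩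

theorem sat_godelSentence_iff (hn : M.IsNModel n) (hr : M.IsRModel r) (hH : H ∈ M.pred) :
    M.Sat (godelSentence n r H) ↔ godelSentence n r H ∉ M.phi H := by
  obtain ⟨hnH, hphi⟩ := hn H hH
  rw [godelSentence, hr.sat_cons_append_self_iff hnH (hr _ hnH).1, hphi, Set.mem_ofPred_eq]

end SmullyanModel

theorem stmt_4_general {α : Type} (M : SmullyanModel α) (n r : α)
    (hn : M.IsNModel n) (hr : M.IsRModel r) :
    ∀ H ∈ M.pred, M.phi H ⊆ M.trueSet →
      ∃ S ∈ M.sent, S ∉ M.phi H ∧ (n :: S) ∉ M.phi H := by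
  intro H hH hsound
  have hG := SmullyanModel.godelSentence_mem_sent hn hr hH
  have hsat := SmullyanModel.sat_godelSentence_iff hn hr hH
  have hS : SmullyanModel.godelSentence n r H ∉ M.phi H := fun h => hsat.mp (hsound h) h
  refine ⟨_, hG, hS, fun hnS => ?_⟩
  exact (hn.sat_cons_iff hG).mp (hsound hnS) (hsat.mpr hS)

/-- Smullyan's Theorem G: in an `nr`-Smullyan model, for any predicate `H` with
`Φ(H) ⊆ True_M` there is a sentence `S` with `S ∉ Φ(H)` and `nS ∉ Φ(H)`. -/
theorem stmt_4 {α : Type} [Nonempty α] (M : SmullyanModel α) (n r : α)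
    (hn : M.IsNModel n) (hr : M.IsRModel r) :
    ∀ H ∈ M.pred, M.phi H ⊆ M.trueSet →
      ∃ S ∈ M.sent, S ∉ M.phi H ∧ (n :: S) ∉ M.phi H :=
  stmt_4_general M n r hn hr
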